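/- Let k ≥ 2 with k ≠ 4 and n ≥ 1, and let Γ = Q_n^k be the k-ary n-cube, Γ = Cay(ℤ_k^n; Ω) with Ω = {±e_i : 1 ≤ i ≤ n}. If k = 2 then |Aut(Γ)| = 2^n · n!, and if k > 2 then |Aut(Γ)| = k^n · 2^n · n!. -/

import Mathlib

/-- The Cayley graph of an additive group `H` with connection set `S`. -/
def cayA (H : Type*) [AddGroup H] (S : Set H) : SimpleGraph H :=
  SimpleGraph.fromRel (fun g h => h - g ∈ S)

/-- The automorphism group of a graph, as a subgroup of the permutations of the vertices. -/
def graphAut {V : Type*} (Γ : SimpleGraph V) : Subgroup (Equiv.Perm V) where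
  carrier := {f | ∀ a b, Γ.Adj (f a) (f b) ↔ Γ.Adj a b}
  one_mem' := by intro a b; simp
  mul_mem' := by
    intro f g hf hg a b
    simp only [Equiv.Perm.mul_apply]
    exact (hf _ _).trans (hg a b)
  inv_mem' := by
    intro f hf a b
    simpa using (hf (f⁻¹ a) (f⁻¹ b)).symm

namespace Aux19

variable {k n : ℕ}

abbrev Om (k n : ℕ) : Set (Fin n → ZMod k) :=
  {v | ∃ i : Fin n, v = Pi.single i 1 ∨ v = -Pi.single i 1}

abbrev Gam (k n : ℕ) : SimpleGraph (Fin n → ZMod k) := cayA _ (Om k n)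

lemma mem_graphAut {V : Type*} {Γ : SimpleGraph V} {f : Equiv.Perm V} :
    f ∈ graphAut Γ ↔ ∀ a b, Γ.Adj (f a) (f b) ↔ Γ.Adj a b := Iff.rfl

lemma one_ne_zero' (hk : 2 ≤ k) : (1 : ZMod k) ≠ 0 := by
  haveI : Fact (1 < k) := ⟨hk⟩
  exact one_ne_zero

lemma two_ne_zero' (hk : 3 ≤ k) : (2 : ZMod k) ≠ 0 := by
  intro h
  have : ((2 : ℕ) : ZMod k) = 0 := by push_cast; exact h
  rw [ZMod.natCast_eq_zero_iff] at this
  have := Nat.le_of_dvd (by norm_num) this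
  omega

lemma four_ne_zero' (hk : 3 ≤ k) (hk4 : k ≠ 4) : (4 : ZMod k) ≠ 0 := by
  intro h
  have h4 : ((4 : ℕ) : ZMod k) = 0 := by push_cast; exact h
  rw [ZMod.natCast_eq_zero_iff] at h4
  have hle := Nat.le_of_dvd (by norm_num) h4
  interval_cases k <;> omega

lemma s_ne_zero (hk : 2 ≤ k) {s : ZMod k} (hs : s = 1 ∨ s = -1) : s ≠ 0 := by
  rcases hs with rfl | rfl
  · exact one_ne_zero' hk
  · exact neg_ne_zero.2 (one_ne_zero' hk)

lemma one_ne_neg_one' (hk : 3 ≤ k) : (1 : ZMod k) ≠ -1 := by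
  intro h
  exact two_ne_zero' hk (by linear_combination h)

lemma neg_single (i : Fin n) (s : ZMod k) :
    -(Pi.single i s : Fin n → ZMod k) = Pi.single i (-s) := by
  funext m
  by_cases h : m = i <;> simp [Pi.single_apply, h]

lemma single_inj (hk : 2 ≤ k) {i j : Fin n} {s t : ZMod k}
    (hs : s ≠ 0) (h : (Pi.single i s : Fin n → ZMod k) = Pi.single j t) :
    i = j ∧ s = t := by
  have hi := congrFun h i
  rw [Pi.single_eq_same, Pi.single_apply] at hi
  by_cases hij : i = j
  · subst hij
    simp at hi
    exact ⟨rfl, hi⟩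
  · rw [if_neg hij] at hi
    exact absurd hi hs

lemma mem_Om_iff {v : Fin n → ZMod k} :
    v ∈ Om k n ↔ ∃ i s, (s = 1 ∨ s = -1) ∧ v = Pi.single i s := by
  constructor
  · rintro ⟨i, rfl | rfl⟩
    · exact ⟨i, 1, Or.inl rfl, rfl⟩
    · exact ⟨i, -1, Or.inr rfl, (neg_single i 1)⟩
  · rintro ⟨i, s, rfl | rfl, rfl⟩
    · exact ⟨i, Or.inl rfl⟩
    · exact ⟨i, Or.inr (neg_single i 1).symm⟩

lemma zero_not_mem_Om (hk : 2 ≤ k) : (0 : Fin n → ZMod k) ∉ Om k n := by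
  rw [mem_Om_iff]
  rintro ⟨i, s, hs, h⟩
  have := congrFun h i
  rw [Pi.single_eq_same] at this
  exact s_ne_zero hk hs this.symm

lemma neg_mem_Om {v : Fin n → ZMod k} (hv : v ∈ Om k n) : -v ∈ Om k n := by
  rw [mem_Om_iff] at hv ⊢
  obtain ⟨i, s, hs, rfl⟩ := hv
  refine ⟨i, -s, ?_, neg_single i s⟩
  rcases hs with rfl | rfl
  · exact Or.inr rfl
  · exact Or.inl (neg_neg 1)

lemma Om_ne_zero (hk : 2 ≤ k) {v : Fin n → ZMod k} (hv : v ∈ Om k n) : v ≠ 0 := by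
  rintro rfl; exact zero_not_mem_Om hk hv

lemma adj_iff (hk : 2 ≤ k) {x y : Fin n → ZMod k} :
    (Gam k n).Adj x y ↔ x ≠ y ∧ y - x ∈ Om k n := by
  rw [Gam, cayA, SimpleGraph.fromRel_adj]
  constructor
  · rintro ⟨hne, h | h⟩
    · exact ⟨hne, h⟩
    · have := neg_mem_Om h
      rw [neg_sub] at this
      exact ⟨hne, this⟩
  · rintro ⟨hne, h⟩
    exact ⟨hne, Or.inl h⟩

/-- Common neighbours of `a` and `b` (independent directions). -/
lemma lemA (hk : 2 ≤ k) {a b z : Fin n → ZMod k}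
    (ha : a ∈ Om k n) (hb : b ∈ Om k n) (hab : a ≠ b) (hab' : b ≠ -a)
    (h1 : z - a ∈ Om k n) (h2 : z - b ∈ Om k n) : z = 0 ∨ z = a + b := by
  rw [mem_Om_iff] at ha hb h1 h2
  obtain ⟨i, s, hs, rfl⟩ := ha
  obtain ⟨j, t, ht, rfl⟩ := hb
  obtain ⟨p, u, hu, hzp⟩ := h1
  obtain ⟨q, w, hw, hzq⟩ := h2
  have hz1 : z = Pi.single i s + Pi.single p u := by
    linear_combination (norm := abel) hzp
  have hz2 : z = Pi.single j t + Pi.single q w := by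
    linear_combination (norm := abel) hzq
  -- i ≠ j
  have hij : i ≠ j := by
    rintro rfl
    rcases hs with rfl | rfl <;> rcases ht with rfl | rfl
    · exact hab rfl
    · exact hab' (neg_single i 1).symm
    · exact hab' (by rw [neg_single, neg_neg])
    · exact hab rfl
  by_cases hpi : p = i
  · subst hpi
    have hz1' : z = Pi.single p (s + u) := by rw [hz1, ← Pi.single_add]
    by_cases hqj : q = j
    · subst hqj
      have hz2' : z = Pi.single q (t + w) := by rw [hz2, ← Pi.single_add]
      have hi := congrFun (hz1'.symm.trans hz2') p
      rw [Pi.single_eq_same, Pi.single_apply, if_neg hij] at hi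
      left
      rw [hz1', hi, Pi.single_zero]
    · exfalso
      have hj := congrFun (hz1'.symm.trans hz2) j
      rw [Pi.single_apply, if_neg (Ne.symm hij), Pi.add_apply, Pi.single_eq_same,
        Pi.single_apply, if_neg (fun h => hqj h.symm)] at hj
      exact s_ne_zero hk ht (by linear_combination -hj)
  · -- p ≠ i : evaluate at i
    have hi := congrFun (hz1.symm.trans hz2) i
    rw [Pi.add_apply, Pi.add_apply, Pi.single_eq_same, Pi.single_apply,
      if_neg (fun h => hpi h.symm), Pi.single_apply, if_neg hij, Pi.single_apply] at hi
    by_cases hiq : i = q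
    · rw [if_pos hiq] at hi
      right
      have hws : w = s := by linear_combination -hi
      rw [hz2, ← hiq, hws]
      abel
    · rw [if_neg hiq] at hi
      exact absurd (by linear_combination hi) (s_ne_zero hk hs)
  

/-- Common neighbours of `a` and `-a`: only `0`, for `k ≥ 3`, `k ≠ 4`. -/
lemma lemB (hk : 3 ≤ k) (hk4 : k ≠ 4) {a z : Fin n → ZMod k}
    (ha : a ∈ Om k n) (h1 : z - a ∈ Om k n) (h2 : z + a ∈ Om k n) : z = 0 := by
  have hk2 : 2 ≤ k := by omega
  rw [mem_Om_iff] at ha h1 h2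
  obtain ⟨i, s, hs, rfl⟩ := ha
  obtain ⟨p, u, hu, hzp⟩ := h1
  obtain ⟨q, w, hw, hzq⟩ := h2
  have hz1 : z = Pi.single i s + Pi.single p u := by linear_combination (norm := abel) hzp
  have hz2 : z = Pi.single i (-s) + Pi.single q w := by
    rw [← neg_single]; linear_combination (norm := abel) hzq
  by_cases hpi : p = i
  · subst hpi
    have hz1' : z = Pi.single p (s + u) := by rw [hz1, ← Pi.single_add]
    by_cases hqp : q = p
    · subst hqp
      have hz2' : z = Pi.single q (-s + w) := by rw [hz2, ← Pi.single_add]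
      have hq := congrFun (hz1'.symm.trans hz2') q
      rw [Pi.single_eq_same, Pi.single_eq_same] at hq
      -- s + u = -s + w, all in {1,-1}, k ∤ 4 : deduce u = -s
      have hu' : u = -s := by
        rcases hs with rfl | rfl <;> rcases hu with rfl | rfl <;> rcases hw with rfl | rfl <;>
          (try rw [neg_neg]) <;>
          first
            | rfl
            | exact absurd (by linear_combination hq) (two_ne_zero' hk)
            | exact absurd (by linear_combination hq) (four_ne_zero' hk hk4)
            | exact absurd (by linear_combination -hq) (four_ne_zero' hk hk4)
            | exact absurd (by linear_combination -hq) (two_ne_zero' hk)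
      rw [hz1', hu', add_neg_cancel, Pi.single_zero]
    · exfalso
      have hq := congrFun (hz1'.symm.trans hz2) q
      rw [Pi.single_apply, if_neg hqp, Pi.add_apply, Pi.single_apply, if_neg hqp,
        Pi.single_eq_same] at hq
      exact s_ne_zero hk2 hw (by linear_combination -hq)
  · exfalso
    -- p ≠ i : evaluate at p, then at i
    have hp := congrFun (hz1.symm.trans hz2) p
    rw [Pi.add_apply, Pi.add_apply, Pi.single_eq_same, Pi.single_apply, if_neg hpi,
      Pi.single_apply, if_neg hpi, Pi.single_apply] at hp
    by_cases hpq : p = q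
    · -- then q ≠ i ; evaluate at i
      have hi := congrFun (hz1.symm.trans hz2) i
      rw [Pi.add_apply, Pi.add_apply, Pi.single_eq_same, Pi.single_apply,
        if_neg (fun h => hpi h.symm), Pi.single_eq_same, Pi.single_apply,
        if_neg (fun h : i = q => hpi (hpq.trans h.symm))] at hi
      have : (2 : ZMod k) * s = 0 := by linear_combination hi
      rcases hs with rfl | rfl
      · exact two_ne_zero' hk (by linear_combination this)
      · exact two_ne_zero' hk (by linear_combination -this)
    · rw [if_neg hpq] at hp
      exact s_ne_zero hk2 hu (by linear_combination hp)
lemma adj_mk (hk : 2 ≤ k) {x y : Fin n → ZMod k} (hne : x ≠ y) (h : y - x ∈ Om k n) :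
    (Gam k n).Adj x y := (adj_iff hk).2 ⟨hne, h⟩

lemma rigid_step (hk : 2 ≤ k) {f : Equiv.Perm (Fin n → ZMod k)}
    (hf : f ∈ graphAut (Gam k n)) {x : Fin n → ZMod k}
    (hx1 : f x = x) (hx2 : ∀ c ∈ Om k n, f (x + c) = x + c)
    {a : Fin n → ZMod k} (ha : a ∈ Om k n) :
    f (x + a) = x + a ∧ ∀ c ∈ Om k n, f (x + a + c) = x + a + c := by
  have hfa : f (x + a) = x + a := hx2 a ha
  have ha0 : a ≠ 0 := Om_ne_zero hk ha
  -- middle case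
  have hmid : ∀ c ∈ Om k n, c ≠ a → c ≠ -a → f (x + a + c) = x + a + c := by
    intro c hc hca hcna
    have hc0 : c ≠ 0 := Om_ne_zero hk hc
    have hadj1 : (Gam k n).Adj (x + a) (x + a + c) := by
      refine adj_mk hk (fun h => hc0 ?_) ?_
      · linear_combination (norm := abel) -h
      · rw [show x + a + c - (x + a) = c by abel]; exact hc
    have hadj2 : (Gam k n).Adj (x + c) (x + a + c) := by
      refine adj_mk hk (fun h => ha0 ?_) ?_
      · linear_combination (norm := abel) -h
      · rw [show x + a + c - (x + c) = a by abel]; exact ha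
    have h1 := (hf _ _).2 hadj1
    rw [hfa] at h1
    have h2 := (hf _ _).2 hadj2
    rw [hx2 c hc] at h2
    rw [adj_iff hk] at h1 h2
    have hw1 : f (x + a + c) - x - a ∈ Om k n := by
      rw [show f (x + a + c) - x - a = f (x + a + c) - (x + a) by abel]; exact h1.2
    have hw2 : f (x + a + c) - x - c ∈ Om k n := by
      rw [show f (x + a + c) - x - c = f (x + a + c) - (x + c) by abel]; exact h2.2
    rcases lemA hk ha hc (Ne.symm hca) hcna hw1 hw2 with h0 | hac
    · exfalso
      have hz : f (x + a + c) = f x := by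
        rw [hx1]; linear_combination (norm := abel) h0
      have := f.injective hz
      exact hcna (by linear_combination (norm := abel) this)
    · linear_combination (norm := abel) hac
  refine ⟨hfa, fun c hc => ?_⟩
  by_cases hcna : c = -a
  · subst hcna
    rw [show x + a + -a = x by abel]; exact hx1
  by_cases hca : c = a
  · subst hca
    -- the x + 2c case
    have hadj : (Gam k n).Adj (x + c) (x + c + c) := by
      refine adj_mk hk (fun h => Om_ne_zero hk hc ?_) ?_
      · linear_combination (norm := abel) -h
      · rw [show x + c + c - (x + c) = c by abel]; exact hc
    have h1 := (hf _ _).2 hadj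
    rw [hfa] at h1
    rw [adj_iff hk] at h1
    obtain ⟨i, s, hs, hval⟩ := mem_Om_iff.1 h1.2
    have hfz : f (x + c + c) = x + c + Pi.single i s := by
      linear_combination (norm := abel) hval
    have hsingle : (Pi.single i s : Fin n → ZMod k) ∈ Om k n := mem_Om_iff.2 ⟨i, s, hs, rfl⟩
    by_cases h1a : (Pi.single i s : Fin n → ZMod k) = -c
    · exfalso
      rw [h1a] at hfz
      have : f (x + c + c) = f x := by rw [hx1]; linear_combination (norm := abel) hfz
      have := f.injective this
      have hcc : c + c = 0 := by linear_combination (norm := abel) this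
      exact hcna (by linear_combination (norm := abel) hcc)
    by_cases h1b : (Pi.single i s : Fin n → ZMod k) = c
    · rw [h1b] at hfz; exact hfz
    · exfalso
      have := hmid _ hsingle h1b h1a
      have := f.injective (hfz.trans this.symm)
      exact h1b (by linear_combination (norm := abel) -this)
  · exact hmid c hc hca hcna

lemma rigid (hk : 2 ≤ k) {f : Equiv.Perm (Fin n → ZMod k)}
    (hf : f ∈ graphAut (Gam k n)) (h0 : f 0 = 0)
    (hΩ : ∀ v ∈ Om k n, f v = v) : f = 1 := by
  haveI : NeZero k := ⟨by omega⟩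
  suffices H : ∀ m, ∀ x : Fin n → ZMod k, (∑ i, (x i).val) = m →
      f x = x ∧ ∀ c ∈ Om k n, f (x + c) = x + c by
    refine Equiv.ext fun x => (H _ x rfl).1
  intro m
  induction m using Nat.strong_induction_on with
  | _ m ih =>
    intro x hxm
    by_cases hx0 : x = 0
    · subst hx0
      refine ⟨h0, fun c hc => ?_⟩
      rw [zero_add]; exact hΩ c hc
    · obtain ⟨i, hi⟩ : ∃ i, x i ≠ 0 := by
        by_contra h; push_neg at h; exact hx0 (funext h)
      set y := x - Pi.single i 1 with hy
      have hyi : y i = x i - 1 := by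
        rw [hy]; simp
      have hyj : ∀ j, j ≠ i → y j = x j := by
        intro j hj
        rw [hy]
        simp [Pi.single_apply, hj]
      have hv1 : (x i).val ≠ 0 := by rwa [Ne, ZMod.val_eq_zero]
      have hlt : (x i).val < k := ZMod.val_lt _
      have hcast : (((x i).val - 1 : ℕ) : ZMod k) = x i - 1 := by
        rw [Nat.cast_sub (by omega : 1 ≤ (x i).val)]
        rw [ZMod.natCast_val, ZMod.cast_id]
        norm_num
      have hvy : (y i).val = (x i).val - 1 := by
        rw [hyi, ← hcast, ZMod.val_cast_of_lt (by omega)]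
      have e1 : ∑ j ∈ Finset.univ.erase i, (y j).val + (y i).val = ∑ j, (y j).val :=
        Finset.sum_erase_add _ _ (Finset.mem_univ i)
      have e2 : ∑ j ∈ Finset.univ.erase i, (x j).val + (x i).val = ∑ j, (x j).val :=
        Finset.sum_erase_add _ _ (Finset.mem_univ i)
      have hee : ∑ j ∈ Finset.univ.erase i, (y j).val
          = ∑ j ∈ Finset.univ.erase i, (x j).val := by
        refine Finset.sum_congr rfl fun j hj => ?_
        rw [hyj j (Finset.ne_of_mem_erase hj)]
      have hsum : ∑ j, (y j).val = m - 1 := by omega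
      have hm1 : m - 1 < m := by omega
      have hP := ih (m - 1) hm1 y hsum
      have hstep := rigid_step hk hf hP.1 hP.2
        (⟨i, Or.inl rfl⟩ : (Pi.single i 1 : Fin n → ZMod k) ∈ Om k n)
      rw [show y + Pi.single i 1 = x by rw [hy]; abel] at hstep
      exact hstep
section Lequiv

def Lequiv (ε : Fin n → ZMod k) (hε : ∀ i, ε i = 1 ∨ ε i = -1) (π : Equiv.Perm (Fin n)) :
    (Fin n → ZMod k) ≃ (Fin n → ZMod k) where
  toFun x := fun j => ε (π.symm j) * x (π.symm j)
  invFun y := fun i => ε i * y (π i)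
  left_inv x := by
    funext i
    simp only [Equiv.symm_apply_apply]
    rcases hε i with h | h <;> rw [h] <;> ring
  right_inv y := by
    funext j
    simp only [Equiv.apply_symm_apply]
    rcases hε (π.symm j) with h | h <;> rw [h] <;> ring

variable {ε : Fin n → ZMod k} {hε : ∀ i, ε i = 1 ∨ ε i = -1} {π : Equiv.Perm (Fin n)}

lemma Lequiv_apply (x : Fin n → ZMod k) (j : Fin n) :
    Lequiv ε hε π x j = ε (π.symm j) * x (π.symm j) := rfl

lemma Lequiv_symm_apply (y : Fin n → ZMod k) (i : Fin n) :
    (Lequiv ε hε π).symm y i = ε i * y (π i) := rfl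

lemma Lequiv_single (i : Fin n) (t : ZMod k) :
    Lequiv ε hε π (Pi.single i t) = Pi.single (π i) (ε i * t) := by
  funext j
  rw [Lequiv_apply, Pi.single_apply, Pi.single_apply]
  by_cases h : π.symm j = i
  · have hj : j = π i := by rw [← h, Equiv.apply_symm_apply]
    rw [if_pos h, if_pos hj, h]
  · have hj : j ≠ π i := fun hh => h (by rw [hh, Equiv.symm_apply_apply])
    rw [if_neg h, if_neg hj, mul_zero]

lemma Lequiv_symm_single (j : Fin n) (t : ZMod k) :
    (Lequiv ε hε π).symm (Pi.single j t) = Pi.single (π.symm j) (ε (π.symm j) * t) := by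
  funext i
  rw [Lequiv_symm_apply, Pi.single_apply, Pi.single_apply]
  by_cases h : π i = j
  · have hi : i = π.symm j := by rw [← h, Equiv.symm_apply_apply]
    rw [if_pos h, if_pos hi, ← hi]
  · have hi : i ≠ π.symm j := fun hh => h (by rw [hh, Equiv.apply_symm_apply])
    rw [if_neg h, if_neg hi, mul_zero]

lemma Lequiv_zero : Lequiv ε hε π 0 = 0 := by
  funext j
  rw [Lequiv_apply]
  simp

lemma Lequiv_sub (x y : Fin n → ZMod k) :
    Lequiv ε hε π y - Lequiv ε hε π x = Lequiv ε hε π (y - x) := by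
  funext j
  simp only [Pi.sub_apply, Lequiv_apply]
  ring

lemma mul_pm {s t : ZMod k} (hs : s = 1 ∨ s = -1) (ht : t = 1 ∨ t = -1) :
    s * t = 1 ∨ s * t = -1 := by
  rcases hs with rfl | rfl <;> rcases ht with rfl | rfl <;> norm_num

lemma Lequiv_mem_Om {v : Fin n → ZMod k} (hv : v ∈ Om k n) : Lequiv ε hε π v ∈ Om k n := by
  obtain ⟨i, t, ht, rfl⟩ := mem_Om_iff.1 hv
  rw [Lequiv_single]
  exact mem_Om_iff.2 ⟨π i, ε i * t, mul_pm (hε i) ht, rfl⟩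

lemma Lequiv_mem_Om_iff {v : Fin n → ZMod k} : Lequiv ε hε π v ∈ Om k n ↔ v ∈ Om k n := by
  refine ⟨fun h => ?_, Lequiv_mem_Om⟩
  obtain ⟨j, t, ht, hval⟩ := mem_Om_iff.1 h
  have : v = (Lequiv ε hε π).symm (Pi.single j t) := by
    rw [← hval, Equiv.symm_apply_apply]
  rw [this, Lequiv_symm_single]
  exact mem_Om_iff.2 ⟨π.symm j, ε (π.symm j) * t, mul_pm (hε (π.symm j)) ht, rfl⟩

lemma Lequiv_mem_graphAut (hk : 2 ≤ k) :
    (Lequiv ε hε π : Equiv.Perm (Fin n → ZMod k)) ∈ graphAut (Gam k n) := by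
  intro a b
  rw [adj_iff hk, adj_iff hk]
  constructor
  · rintro ⟨hne, hmem⟩
    rw [Lequiv_sub, Lequiv_mem_Om_iff] at hmem
    exact ⟨fun h => hne (by rw [h]), hmem⟩
  · rintro ⟨hne, hmem⟩
    refine ⟨fun h => hne ((Lequiv ε hε π).injective h), ?_⟩
    rw [Lequiv_sub, Lequiv_mem_Om_iff]
    exact hmem

end Lequiv

lemma f_mem_Om (hk : 2 ≤ k) {f : Equiv.Perm (Fin n → ZMod k)}
    (hf : f ∈ graphAut (Gam k n)) (h0 : f 0 = 0) {v : Fin n → ZMod k}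
    (hv : v ∈ Om k n) : f v ∈ Om k n := by
  have hadj : (Gam k n).Adj 0 v := by
    refine adj_mk hk (fun h => Om_ne_zero hk hv h.symm) ?_
    rwa [sub_zero]
  have := (hf _ _).2 hadj
  rw [h0, adj_iff hk, sub_zero] at this
  exact this.2

lemma ne_neg_self (hk : 3 ≤ k) {a : Fin n → ZMod k} (ha : a ∈ Om k n) : a ≠ -a := by
  obtain ⟨i, s, hs, rfl⟩ := mem_Om_iff.1 ha
  intro h
  have hi := congrFun h i
  rw [neg_single, Pi.single_eq_same, Pi.single_eq_same] at hi
  have h2 : (2 : ZMod k) * s = 0 := by linear_combination hi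
  rcases hs with rfl | rfl
  · exact two_ne_zero' hk (by linear_combination h2)
  · exact two_ne_zero' hk (by linear_combination -h2)

lemma pairing (hk : 3 ≤ k) (hk4 : k ≠ 4) {f : Equiv.Perm (Fin n → ZMod k)}
    (hf : f ∈ graphAut (Gam k n)) (h0 : f 0 = 0) {a : Fin n → ZMod k}
    (ha : a ∈ Om k n) : f (-a) = -(f a) := by
  have hk2 : 2 ≤ k := by omega
  by_contra hne
  have hb : f a ∈ Om k n := f_mem_Om hk2 hf h0 ha
  have hb' : f (-a) ∈ Om k n := f_mem_Om hk2 hf h0 (neg_mem_Om ha)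
  have hadj1 : (Gam k n).Adj (f a) (f a + f (-a)) := by
    refine adj_mk hk2 (fun h => Om_ne_zero hk2 hb' ?_) ?_
    · linear_combination (norm := abel) -h
    · rw [show f a + f (-a) - f a = f (-a) by abel]; exact hb'
  have hadj2 : (Gam k n).Adj (f (-a)) (f a + f (-a)) := by
    refine adj_mk hk2 (fun h => Om_ne_zero hk2 hb ?_) ?_
    · linear_combination (norm := abel) -h
    · rw [show f a + f (-a) - f (-a) = f a by abel]; exact hb
  have h1 : (Gam k n).Adj a (f.symm (f a + f (-a))) := by
    refine (hf _ _).1 ?_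
    rw [Equiv.apply_symm_apply]
    exact hadj1
  have h2 : (Gam k n).Adj (-a) (f.symm (f a + f (-a))) := by
    refine (hf _ _).1 ?_
    rw [Equiv.apply_symm_apply]
    exact hadj2
  rw [adj_iff hk2] at h1 h2
  have hB := lemB hk hk4 ha h1.2
    (by rw [show f.symm (f a + f (-a)) + a = f.symm (f a + f (-a)) - -a by abel]; exact h2.2)
  have hz0 : f a + f (-a) = 0 := by
    rw [← h0, ← hB, Equiv.apply_symm_apply]
  exact hne (by linear_combination (norm := abel) hz0)

/-- The stabiliser of `0` in the automorphism group, as a type. -/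
def S0 (k n : ℕ) : Type :=
  {f : Equiv.Perm (Fin n → ZMod k) // f ∈ graphAut (Gam k n) ∧ f 0 = 0}

def sg (k : ℕ) (b : Bool) : ZMod k := cond b 1 (-1)

lemma sg_spec (b : Bool) : sg k b = 1 ∨ sg k b = -1 := by cases b <;> simp [sg]

def Phi (hk : 2 ≤ k) : (Fin n → Bool) × Equiv.Perm (Fin n) → S0 k n :=
  fun bp => ⟨Lequiv (fun i => sg k (bp.1 i)) (fun i => sg_spec _) bp.2,
    Lequiv_mem_graphAut hk, Lequiv_zero⟩

lemma Phi_injective (hk : 3 ≤ k) : Function.Injective (Phi (n := n) (by omega : 2 ≤ k)) := by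
  have hk2 : 2 ≤ k := by omega
  rintro ⟨b, π⟩ ⟨b', π'⟩ h
  have hval := congrArg Subtype.val h
  simp only [Phi] at hval
  have key : ∀ i, π i = π' i ∧ sg k (b i) = sg k (b' i) := by
    intro i
    have h2 : Lequiv (fun i => sg k (b i)) (fun i => sg_spec _) π (Pi.single i 1)
        = Lequiv (fun i => sg k (b' i)) (fun i => sg_spec _) π' (Pi.single i 1) := by
      rw [hval]
    rw [Lequiv_single, Lequiv_single, mul_one, mul_one] at h2
    exact single_inj hk2 (s_ne_zero hk2 (sg_spec _)) h2
  have hb : b = b' := by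
    funext i
    have h2 := (key i).2
    cases hbi : b i <;> cases hbi' : b' i <;> rw [hbi, hbi'] at h2 <;>
      simp only [sg, cond_true, cond_false] at h2
    all_goals first
      | rfl
      | exact absurd h2.symm (one_ne_neg_one' hk)
      | exact absurd h2 (one_ne_neg_one' hk)
  have hp : π = π' := Equiv.ext fun i => (key i).1
  rw [hb, hp]

lemma Phi_surjective (hk : 3 ≤ k) (hk4 : k ≠ 4) :
    Function.Surjective (Phi (n := n) (by omega : 2 ≤ k)) := by
  have hk2 : 2 ≤ k := by omega
  rintro ⟨f, hf, h0⟩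
  have hmem : ∀ i : Fin n, f (Pi.single i 1) ∈ Om k n := fun i =>
    f_mem_Om hk2 hf h0 ⟨i, Or.inl rfl⟩
  choose π ε hε hval using fun i => mem_Om_iff.1 (hmem i)
  have hπinj : Function.Injective π := by
    intro i i' hii
    by_cases hee : ε i = ε i'
    · have : f (Pi.single i 1) = f (Pi.single i' 1) := by
        rw [hval i, hval i', hii, hee]
      have := f.injective this
      exact ((single_inj hk2 (one_ne_zero' hk2) this).1 : i = i')
    · have hee' : ε i' = -ε i := by
        rcases hε i with h | h <;> rcases hε i' with h' | h'
        · exact absurd (h.trans h'.symm) hee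
        · rw [h, h']; try norm_num
        · rw [h, h']; try norm_num
        · exact absurd (h.trans h'.symm) hee
      have hpair : f (-(Pi.single i 1)) = -(f (Pi.single i 1)) :=
        pairing hk hk4 hf h0 ⟨i, Or.inl rfl⟩
      have hf2 : f (Pi.single i' 1) = f (Pi.single i (-1)) := by
        calc f (Pi.single i' 1) = Pi.single (π i') (ε i') := hval i'
          _ = Pi.single (π i) (-ε i) := by rw [hee', ← hii]
          _ = -(Pi.single (π i) (ε i)) := (neg_single _ _).symm
          _ = -(f (Pi.single i 1)) := by rw [hval i]
          _ = f (-(Pi.single i 1)) := hpair.symm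
          _ = f (Pi.single i (-1)) := by rw [neg_single]
      have := f.injective hf2
      have := single_inj hk2 (one_ne_zero' hk2) this
      exact absurd this.2 (one_ne_neg_one' hk)
  have hπbij : Function.Bijective π := Finite.injective_iff_bijective.1 hπinj
  let πe : Equiv.Perm (Fin n) := Equiv.ofBijective π hπbij
  let b : Fin n → Bool := fun i => decide (ε i = 1)
  have hsg : ∀ i, sg k (b i) = ε i := by
    intro i
    by_cases h : ε i = 1
    · have hb : b i = true := by simp [b, h]
      rw [hb]
      show (1 : ZMod k) = ε i
      rw [h]
    · have h' : ε i = -1 := (hε i).resolve_left h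
      have hb : b i = false := by simp [b, h]
      rw [hb]
      show (-1 : ZMod k) = ε i
      rw [h']
  refine ⟨(b, πe), ?_⟩
  set L : Equiv.Perm (Fin n → ZMod k) :=
    Lequiv (fun i => sg k (b i)) (fun i => sg_spec _) πe with hL
  have hLmem : L ∈ graphAut (Gam k n) := Lequiv_mem_graphAut hk2
  have hL0 : L 0 = 0 := Lequiv_zero
  have hLsingle : ∀ (j : Fin n) (t : ZMod k), L (Pi.single j t) = Pi.single (π j) (ε j * t) := by
    intro j t
    rw [hL, Lequiv_single, hsg]
    rfl
  have hfix : ∀ v ∈ Om k n, (L⁻¹ * f) v = v := by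
    intro v hv
    obtain ⟨j, t, ht, rfl⟩ := mem_Om_iff.1 hv
    have hfv : f (Pi.single j t) = Pi.single (π j) (ε j * t) := by
      rcases ht with rfl | rfl
      · rw [mul_one]; exact hval j
      · rw [show (Pi.single j (-1) : Fin n → ZMod k) = -Pi.single j 1 from (neg_single j 1).symm,
          pairing hk hk4 hf h0 ⟨j, Or.inl rfl⟩, hval j, neg_single]
        congr 1
        ring
    have : (L⁻¹ * f) (Pi.single j t) = L.symm (Pi.single (π j) (ε j * t)) := by
      rw [Equiv.Perm.mul_apply, hfv]
      rfl
    rw [this, Equiv.symm_apply_eq, hLsingle]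
  have h0' : (L⁻¹ * f) 0 = 0 := by
    rw [Equiv.Perm.mul_apply, h0]
    show L.symm 0 = 0
    rw [Equiv.symm_apply_eq, hL0]
  have hrig := rigid hk2 (Subgroup.mul_mem _ (Subgroup.inv_mem _ hLmem) hf) h0' hfix
  have : f = L := by
    have := inv_mul_eq_one.1 hrig
    exact this.symm
  exact Subtype.ext this.symm
def Psi : Equiv.Perm (Fin n) → S0 2 n := fun π =>
  ⟨Lequiv (fun _ => (1 : ZMod 2)) (fun _ => Or.inl rfl) π,
    Lequiv_mem_graphAut (le_refl 2), Lequiv_zero⟩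

lemma Psi_injective : Function.Injective (Psi (n := n)) := by
  intro π π' h
  have hval : Lequiv (fun _ => (1 : ZMod 2)) (fun _ => Or.inl rfl) π
      = Lequiv (fun _ => (1 : ZMod 2)) (fun _ => Or.inl rfl) π' :=
    congrArg Subtype.val h
  refine Equiv.ext fun i => ?_
  have h2 : Lequiv (fun _ => (1 : ZMod 2)) (fun _ => Or.inl rfl) π (Pi.single i 1)
      = Lequiv (fun _ => (1 : ZMod 2)) (fun _ => Or.inl rfl) π' (Pi.single i 1) := by
    rw [hval]
  rw [Lequiv_single, Lequiv_single] at h2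
  exact (single_inj (le_refl 2) (by decide : ((1 : ZMod 2) * 1) ≠ 0) h2).1

lemma Psi_surjective : Function.Surjective (Psi (n := n)) := by
  rintro ⟨f, hf, h0⟩
  have hmem : ∀ i : Fin n, f (Pi.single i 1) ∈ Om 2 n := fun i =>
    f_mem_Om (le_refl 2) hf h0 ⟨i, Or.inl rfl⟩
  choose π ε hε hval using fun i => mem_Om_iff.1 (hmem i)
  have hneg1 : (-1 : ZMod 2) = 1 := by decide
  have hval1 : ∀ i, f (Pi.single i 1) = Pi.single (π i) 1 := by
    intro i
    rcases hε i with h | h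
    · rw [hval i, h]
    · rw [hval i, h, hneg1]
  have hπinj : Function.Injective π := by
    intro i i' hii
    have : f (Pi.single i 1) = f (Pi.single i' 1) := by
      rw [hval1 i, hval1 i', hii]
    have := f.injective this
    exact (single_inj (le_refl 2) (one_ne_zero' (le_refl 2)) this).1
  have hπbij : Function.Bijective π := Finite.injective_iff_bijective.1 hπinj
  let πe : Equiv.Perm (Fin n) := Equiv.ofBijective π hπbij
  refine ⟨πe, ?_⟩
  set L : Equiv.Perm (Fin n → ZMod 2) :=
    Lequiv (fun _ => (1 : ZMod 2)) (fun _ => Or.inl rfl) πe with hL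
  have hLmem : L ∈ graphAut (Gam 2 n) := Lequiv_mem_graphAut (le_refl 2)
  have hL0 : L 0 = 0 := Lequiv_zero
  have hfix : ∀ v ∈ Om 2 n, (L⁻¹ * f) v = v := by
    intro v hv
    obtain ⟨j, t, ht, rfl⟩ := mem_Om_iff.1 hv
    have ht1 : t = 1 := by
      rcases ht with rfl | rfl
      · rfl
      · exact hneg1
    subst ht1
    have : (L⁻¹ * f) (Pi.single j 1) = L.symm (Pi.single (π j) 1) := by
      rw [Equiv.Perm.mul_apply, hval1 j]
      rfl
    rw [this, Equiv.symm_apply_eq, hL, Lequiv_single, one_mul]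
    rfl
  have h0' : (L⁻¹ * f) 0 = 0 := by
    rw [Equiv.Perm.mul_apply, h0]
    show L.symm 0 = 0
    rw [Equiv.symm_apply_eq, hL0]
  have hrig := rigid (le_refl 2) (Subgroup.mul_mem _ (Subgroup.inv_mem _ hLmem) hf) h0' hfix
  exact Subtype.ext (inv_mul_eq_one.1 hrig)

lemma card_S0_big (hk : 3 ≤ k) (hk4 : k ≠ 4) :
    Nat.card (S0 k n) = 2 ^ n * n.factorial := by
  have e : ((Fin n → Bool) × Equiv.Perm (Fin n)) ≃ S0 k n :=
    Equiv.ofBijective _ ⟨Phi_injective hk, Phi_surjective hk hk4⟩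
  rw [← Nat.card_congr e, Nat.card_prod, Nat.card_fun]
  simp [Nat.card_eq_fintype_card, Fintype.card_perm]

lemma card_S0_two : Nat.card (S0 2 n) = n.factorial := by
  have e : Equiv.Perm (Fin n) ≃ S0 2 n :=
    Equiv.ofBijective _ ⟨Psi_injective, Psi_surjective⟩
  rw [← Nat.card_congr e]
  simp [Nat.card_eq_fintype_card, Fintype.card_perm]

lemma addRight_mem (hk : 2 ≤ k) (v : Fin n → ZMod k) :
    Equiv.addRight v ∈ graphAut (Gam k n) := by
  intro a b
  show (Gam k n).Adj (a + v) (b + v) ↔ (Gam k n).Adj a b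
  rw [adj_iff hk, adj_iff hk, show b + v - (a + v) = b - a by abel]
  simp only [ne_eq, add_left_inj]

def decompEquiv (hk : 2 ≤ k) :
    {f : Equiv.Perm (Fin n → ZMod k) // f ∈ graphAut (Gam k n)}
      ≃ ((Fin n → ZMod k) × S0 k n) where
  toFun f := ⟨f.1 0, ⟨Equiv.addRight (-(f.1 0)) * f.1,
    Subgroup.mul_mem _ (addRight_mem hk _) f.2, by
      simp [Equiv.Perm.mul_apply]⟩⟩
  invFun vg := ⟨Equiv.addRight vg.1 * vg.2.1,
    Subgroup.mul_mem _ (addRight_mem hk _) vg.2.2.1⟩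
  left_inv f := by
    apply Subtype.ext
    apply Equiv.ext
    intro x
    show f.1 x + -(f.1 0) + f.1 0 = f.1 x
    abel
  right_inv vg := by
    obtain ⟨v, g, hgmem, hg0⟩ := vg
    refine Prod.ext ?_ ?_
    · show g 0 + v = v
      rw [hg0, zero_add]
    · apply Subtype.ext
      apply Equiv.ext
      intro x
      show g x + v + -(g 0 + v) = g x
      rw [hg0]
      abel

lemma card_graphAut (hk : 2 ≤ k) :
    Nat.card ↥(graphAut (Gam k n)) = k ^ n * Nat.card (S0 k n) := by
  rw [Nat.card_congr (decompEquiv hk), Nat.card_prod, Nat.card_fun]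
  congr 2
  · simp [Nat.card_zmod]
  · simp [Nat.card_eq_fintype_card]

end Aux19

theorem stmt19 (k n : ℕ) (hk : 2 ≤ k) (hk4 : k ≠ 4) (hn : 1 ≤ n) :
    (k = 2 → Nat.card (graphAut (cayA (Fin n → ZMod k)
        {v | ∃ i : Fin n, v = Pi.single i 1 ∨ v = -Pi.single i 1})) =
      2 ^ n * n.factorial) ∧
    (2 < k → Nat.card (graphAut (cayA (Fin n → ZMod k)
        {v | ∃ i : Fin n, v = Pi.single i 1 ∨ v = -Pi.single i 1})) =
      k ^ n * 2 ^ n * n.factorial) := by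
  constructor
  · intro hk2
    subst hk2
    show Nat.card ↥(graphAut (Aux19.Gam 2 n)) = 2 ^ n * n.factorial
    rw [Aux19.card_graphAut (le_refl 2), Aux19.card_S0_two]
  · intro hk3'
    have hk3 : 3 ≤ k := hk3'
    show Nat.card ↥(graphAut (Aux19.Gam k n)) = k ^ n * 2 ^ n * n.factorial
    rw [Aux19.card_graphAut (by omega : 2 ≤ k), Aux19.card_S0_big hk3 hk4, mul_assoc]
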